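/- Let k ≥ 1 and let ℓ and m be k-subsets. Then ℓ and m are noncrossing if and only if α(ℓ,m) + β(ℓ,m) − |{ℓ_1,…,ℓ_k} ∩ {m_1,…,m_k}| = k. -/

import Mathlib

/-!
Write `L`, `M` for the value sets of `ℓ`, `m` and `f x = #{a ∈ L | a ≤ x} - #{b ∈ M | b ≤ x}`.
For strictly monotone `ℓ`, `m`, the condition `ℓ i ≤ m (i + d)` for all `i` says exactly
`-f ≤ d`, so `α = k + min f` and `β = k - max f`, and the claim becomes
`max f - min f = #(L \ M)`. Across a window `(u, v]` the function `f` grows by the number of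
points of `L \ M` minus the number of points of `M \ L` in it; since `#(L \ M) = #(M \ L)`,
the oscillation of `f` is at most `#(L \ M)`, with equality exactly when some window contains
one of the two differences and misses the other. Such a window exists exactly when the
differences do not interlace, i.e. when `ℓ` and `m` do not cross.
-/

/-- `α(ℓ,m)`: the largest `p ∈ {1,…,k}` such that `ℓ i ≤ m j` for all `1 ≤ i,j ≤ k`
with `j − i = k − p`, and `0` if no such `p` exists. -/
noncomputable def kAlpha (k : ℕ) (ℓ m : Fin k → ℤ) : ℕ :=
  sSup {p : ℕ | 1 ≤ p ∧ p ≤ k ∧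
    ∀ i j : Fin k, (j.val : ℤ) - (i.val : ℤ) = (k : ℤ) - (p : ℤ) → ℓ i ≤ m j}

/-- `β(ℓ,m)`: the largest `p ∈ {1,…,k}` such that `ℓ i ≥ m j` for all `1 ≤ i,j ≤ k`
with `i − j = k − p`, and `0` if no such `p` exists. -/
noncomputable def kBeta (k : ℕ) (ℓ m : Fin k → ℤ) : ℕ :=
  sSup {p : ℕ | 1 ≤ p ∧ p ≤ k ∧
    ∀ i j : Fin k, (i.val : ℤ) - (j.val : ℤ) = (k : ℤ) - (p : ℤ) → m j ≤ ℓ i}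

/-- Two `k`-subsets `ℓ` and `m` cross if there exist `i₁, i₂` in the set of values
of `ℓ` not values of `m`, and `j₁, j₂` in the set of values of `m` not values of `ℓ`,
with `i₁ < j₁ < i₂ < j₂` or `j₁ < i₁ < j₂ < i₂`. -/
def Crossing (k : ℕ) (ℓ m : Fin k → ℤ) : Prop :=
  ∃ i₁ i₂ j₁ j₂ : ℤ,
    i₁ ∈ Set.range ℓ \ Set.range m ∧ i₂ ∈ Set.range ℓ \ Set.range m ∧
    j₁ ∈ Set.range m \ Set.range ℓ ∧ j₂ ∈ Set.range m \ Set.range ℓ ∧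
    ((i₁ < j₁ ∧ j₁ < i₂ ∧ i₂ < j₂) ∨ (j₁ < i₁ ∧ i₁ < j₂ ∧ j₂ < i₂))

open Finset

section Interlacing

def Separates (P Q : Finset ℤ) (u v : ℤ) : Prop :=
  (∀ a ∈ P, a ∈ Set.Ioc u v) ∧ ∀ b ∈ Q, b ∉ Set.Ioc u v

def Interlace (P Q : Finset ℤ) : Prop :=
  ∃ a₁ ∈ P, ∃ b₁ ∈ Q, ∃ a₂ ∈ P, ∃ b₂ ∈ Q, a₁ < b₁ ∧ b₁ < a₂ ∧ a₂ < b₂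

variable {P Q : Finset ℤ}

lemma Separates.not_interlace {u v : ℤ} (h : Separates P Q u v) :
    ¬Interlace P Q ∧ ¬Interlace Q P := by
  have between : ∀ a₁ ∈ P, ∀ a₂ ∈ P, ∀ b ∈ Q, ¬(a₁ < b ∧ b < a₂) := by
    rintro a₁ ha₁ a₂ ha₂ b hb ⟨h₁, h₂⟩
    obtain ⟨hu, -⟩ := h.1 a₁ ha₁
    obtain ⟨-, hv⟩ := h.1 a₂ ha₂
    exact h.2 b hb ⟨hu.trans h₁, h₂.le.trans hv⟩
  constructor
  · rintro ⟨a₁, ha₁, b₁, hb₁, a₂, ha₂, -, -, h₁, h₂, -⟩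
    exact between a₁ ha₁ a₂ ha₂ b₁ hb₁ ⟨h₁, h₂⟩
  · rintro ⟨-, -, a₁, ha₁, b₂, hb₂, a₂, ha₂, -, h₁, h₂⟩
    exact between a₁ ha₁ a₂ ha₂ b₂ hb₂ ⟨h₁, h₂⟩

lemma exists_separates_of_forall_lt (hPQ : Disjoint P Q) (hI : ¬Interlace P Q) {z : ℤ}
    (hz : z ∈ P) (hzQ : ∀ b ∈ Q, z < b) : ∃ u v, u ≤ v ∧ Separates Q P u v := by
  rcases Q.eq_empty_or_nonempty with rfl | hQ
  · exact ⟨z, z, le_rfl, by simp, fun a _ h => by simp at h⟩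
  refine ⟨Q.min' hQ - 1, Q.max' hQ, by linarith [Q.min'_le_max' hQ],
    fun b hb => ⟨by linarith [Q.min'_le b hb], Q.le_max' b hb⟩, ?_⟩
  -- a point of `P` in this window would give the pattern `z < min Q < a < max Q`
  rintro a ha ⟨hlo, hhi⟩
  have hμ := Q.min'_mem hQ
  have hν := Q.max'_mem hQ
  have hne : ∀ b ∈ Q, a ≠ b := fun b hb hab => disjoint_left.mp hPQ ha (hab ▸ hb)
  exact hI ⟨z, hz, _, hμ, a, ha, _, hν, hzQ _ hμ,
    lt_of_le_of_ne (by omega) (hne _ hμ).symm, lt_of_le_of_ne hhi (hne _ hν)⟩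

lemma exists_separates (hPQ : Disjoint P Q) (h₁ : ¬Interlace P Q) (h₂ : ¬Interlace Q P) :
    ∃ u v, u ≤ v ∧ (Separates P Q u v ∨ Separates Q P u v) := by
  rcases (P ∪ Q).eq_empty_or_nonempty with h | h
  · obtain ⟨rfl, rfl⟩ := union_eq_empty.mp h
    exact ⟨0, 0, le_rfl, .inl ⟨by simp, by simp⟩⟩
  have hmin := (P ∪ Q).min'_le
  have hne : ∀ a ∈ P, ∀ b ∈ Q, a ≠ b := fun a ha b hb hab =>
    disjoint_left.mp hPQ ha (hab ▸ hb)
  rcases mem_union.mp ((P ∪ Q).min'_mem h) with hz | hz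
  · obtain ⟨u, v, huv, hs⟩ := exists_separates_of_forall_lt hPQ h₁ hz fun b hb =>
      lt_of_le_of_ne (hmin b (mem_union_right P hb)) (hne _ hz b hb)
    exact ⟨u, v, huv, .inr hs⟩
  · obtain ⟨u, v, huv, hs⟩ := exists_separates_of_forall_lt hPQ.symm h₂ hz fun a ha =>
      lt_of_le_of_ne (hmin a (mem_union_left Q ha)) (hne a ha _ hz).symm
    exact ⟨u, v, huv, .inl hs⟩

end Interlacing

section Counting

variable (S T : Finset ℤ)

def countLE (x : ℤ) : ℕ := #{s ∈ S | s ≤ x}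

def countDiff (x : ℤ) : ℤ := countLE S x - countLE T x

lemma countDiff_swap (x : ℤ) : countDiff T S x = -countDiff S T x := by
  simp only [countDiff]; ring

lemma countDiff_swap_le_iff {x y : ℤ} :
    countDiff T S x ≤ countDiff T S y ↔ countDiff S T y ≤ countDiff S T x := by
  rw [countDiff_swap S T, countDiff_swap S T, neg_le_neg_iff]

lemma countLE_add_card_filter_Ioc {u v : ℤ} (h : u ≤ v) :
    countLE S u + #{s ∈ S | s ∈ Set.Ioc u v} = countLE S v := by
  rw [countLE, countLE, ← card_filter_add_card_filter_not (s := {s ∈ S | s ≤ v}) (p := (· ≤ u)),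
    filter_filter, filter_filter]
  congr 2 <;> ext s <;> simp only [mem_filter, Set.mem_Ioc] <;> grind

lemma card_filter_sdiff_add_card_filter_inter (p : ℤ → Prop) [DecidablePred p] :
    #{s ∈ S \ T | p s} + #{s ∈ S ∩ T | p s} = #{s ∈ S | p s} := by
  rw [← card_union_of_disjoint (disjoint_filter_filter (disjoint_sdiff_inter S T)),
    ← filter_union, sdiff_union_inter]

lemma countDiff_sub_countDiff {u v : ℤ} (h : u ≤ v) :
    countDiff S T v - countDiff S T u =
      (#{s ∈ S \ T | s ∈ Set.Ioc u v} : ℤ) - #{s ∈ T \ S | s ∈ Set.Ioc u v} := by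
  have hS := countLE_add_card_filter_Ioc S h
  have hT := countLE_add_card_filter_Ioc T h
  have hS' := card_filter_sdiff_add_card_filter_inter S T (· ∈ Set.Ioc u v)
  have hT' := card_filter_sdiff_add_card_filter_inter T S (· ∈ Set.Ioc u v)
  rw [inter_comm] at hT'
  simp only [countDiff]
  omega

lemma countDiff_sub_le_of_le {u v : ℤ} (h : u ≤ v) :
    countDiff S T v - countDiff S T u ≤ #(S \ T) := by
  rw [countDiff_sub_countDiff S T h]
  have : #{s ∈ S \ T | s ∈ Set.Ioc u v} ≤ #(S \ T) := card_filter_le _ _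
  omega

lemma countDiff_sub_eq_iff {u v : ℤ} (h : u ≤ v) :
    countDiff S T v - countDiff S T u = #(S \ T) ↔ Separates (S \ T) (T \ S) u v := by
  rw [countDiff_sub_countDiff S T h, Separates,
    ← card_filter_eq_iff (p := fun s => s ∈ Set.Ioc u v),
    ← card_filter_eq_zero_iff (p := fun s => s ∈ Set.Ioc u v)]
  have : #{s ∈ S \ T | s ∈ Set.Ioc u v} ≤ #(S \ T) := card_filter_le _ _
  omega

lemma countDiff_sub_le (hST : #S = #T) (u v : ℤ) :
    countDiff S T v - countDiff S T u ≤ #(S \ T) := by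
  rcases le_total u v with h | h
  · exact countDiff_sub_le_of_le S T h
  · have := countDiff_sub_le_of_le T S h
    rw [countDiff_swap S T, countDiff_swap S T, card_sdiff_comm hST.symm] at this
    linarith

end Counting

section Oscillation

variable (S T : Finset ℤ)

lemma countDiff_le_card (x : ℤ) : countDiff S T x ≤ #S := by
  have : countLE S x ≤ #S := card_filter_le _ _
  simp only [countDiff]
  omega

lemma exists_forall_countDiff_le : ∃ v, ∀ x, countDiff S T x ≤ countDiff S T v := by
  obtain ⟨_, ⟨v, rfl⟩, hv⟩ := Int.exists_greatest_of_bdd (P := fun z => ∃ x, countDiff S T x = z)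
    ⟨#S, by rintro _ ⟨x, rfl⟩; exact countDiff_le_card S T x⟩ ⟨_, 0, rfl⟩
  exact ⟨v, fun x => hv _ ⟨x, rfl⟩⟩

lemma exists_forall_le_countDiff : ∃ u, ∀ x, countDiff S T u ≤ countDiff S T x := by
  obtain ⟨u, hu⟩ := exists_forall_countDiff_le T S
  exact ⟨u, fun x => (countDiff_swap_le_iff S T).mp (hu x)⟩

lemma exists_countDiff_eq_zero : ∃ x, countDiff S T x = 0 := by
  obtain ⟨b, hb⟩ := (S ∪ T).bddBelow
  have h : ∀ X ⊆ S ∪ T, countLE X (b - 1) = 0 := fun X hX =>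
    card_filter_eq_zero_iff.mpr fun s hs => by have := hb (mem_coe.mpr (hX hs)); omega
  exact ⟨b - 1, by simp [countDiff, h S subset_union_left, h T subset_union_right]⟩

lemma countDiff_sub_eq_card_sdiff_iff (hST : #S = #T) {u v : ℤ}
    (hu : ∀ x, countDiff S T u ≤ countDiff S T x) (hv : ∀ x, countDiff S T x ≤ countDiff S T v) :
    countDiff S T v - countDiff S T u = #(S \ T) ↔
      ¬Interlace (S \ T) (T \ S) ∧ ¬Interlace (T \ S) (S \ T) := by
  have swap (x y : ℤ) : countDiff T S y - countDiff T S x = #(T \ S) ↔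
      countDiff S T x - countDiff S T y = #(S \ T) := by
    rw [countDiff_swap S T, countDiff_swap S T, card_sdiff_comm hST]
    constructor <;> intro <;> linarith
  constructor
  · intro h
    rcases le_total u v with huv | hvu
    · exact ((countDiff_sub_eq_iff S T huv).mp h).not_interlace
    · exact ((countDiff_sub_eq_iff T S hvu).mp ((swap v u).mpr h)).not_interlace.symm
  · rintro ⟨h₁, h₂⟩
    have hle := countDiff_sub_le S T hST u v
    obtain ⟨u', v', huv, hs | hs⟩ := exists_separates disjoint_sdiff_sdiff h₁ h₂
    · have := (countDiff_sub_eq_iff S T huv).mpr hs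
      linarith [hu u', hv v']
    · have := (swap u' v').mp ((countDiff_sub_eq_iff T S huv).mpr hs)
      linarith [hu v', hv u']

end Oscillation

section KSubsets

variable {k : ℕ} {ℓ m : Fin k → ℤ}

lemma card_image_of_strictMono (hℓ : StrictMono ℓ) : #(univ.image ℓ) = k := by
  simp [card_image_of_injective _ hℓ.injective]

lemma val_lt_countLE_image_iff (hℓ : StrictMono ℓ) (j : Fin k) (x : ℤ) :
    j.val < countLE (univ.image ℓ) x ↔ ℓ j ≤ x := by
  rw [countLE, filter_image, card_image_of_injective _ hℓ.injective]
  constructor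
  · intro h
    by_contra! hx
    have hsub : ({i | ℓ i ≤ x} : Finset (Fin k)) ⊆ Iio j := fun i hi =>
      mem_Iio.mpr (hℓ.lt_iff_lt.mp ((mem_filter.mp hi).2.trans_lt hx))
    have := card_le_card hsub
    rw [Fin.card_Iio] at this
    omega
  · intro h
    have hsub : Iic j ⊆ ({i | ℓ i ≤ x} : Finset (Fin k)) := fun i hi =>
      mem_filter.mpr ⟨mem_univ _, (hℓ.monotone (mem_Iic.mp hi)).trans h⟩
    have := card_le_card hsub
    rw [Fin.card_Iic] at this
    omega

lemma forall_le_shift_iff (hℓ : StrictMono ℓ) (hm : StrictMono m) (d : ℕ) :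
    (∀ i j : Fin k, (j.val : ℤ) - (i.val : ℤ) = d → ℓ i ≤ m j) ↔
      ∀ x, countLE (univ.image m) x ≤ countLE (univ.image ℓ) x + d := by
  constructor
  · intro h x
    by_contra! hx
    set t := countLE (univ.image m) x
    have htk : t ≤ k := (card_filter_le _ _).trans (card_image_of_strictMono hm).le
    have hmj := (val_lt_countLE_image_iff hm ⟨t - 1, by omega⟩ x).mp (by simp only; omega)
    have := (val_lt_countLE_image_iff hℓ ⟨t - 1 - d, by omega⟩ x).mpr
      ((h _ _ (by simp only; omega)).trans hmj)
    simp only at this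
    omega
  · intro h i j hij
    have hj := (val_lt_countLE_image_iff hm j (m j)).mpr le_rfl
    have := h (m j)
    exact (val_lt_countLE_image_iff hℓ i (m j)).mp (by omega)

lemma Nat.sSup_Icc_one (n : ℕ) : sSup (Set.Icc 1 n) = n := by
  rcases n with _ | n
  · simp
  · exact csSup_Icc (by omega)

lemma kAlpha_eq (hℓ : StrictMono ℓ) (hm : StrictMono m) {u : ℤ}
    (hu : ∀ x, countDiff (univ.image ℓ) (univ.image m) u ≤
      countDiff (univ.image ℓ) (univ.image m) x) :
    (kAlpha k ℓ m : ℤ) = k + countDiff (univ.image ℓ) (univ.image m) u := by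
  obtain ⟨x₀, hx₀⟩ := exists_countDiff_eq_zero (univ.image ℓ) (univ.image m)
  have hA0 := hx₀ ▸ hu x₀
  have hAk := countDiff_le_card (univ.image m) (univ.image ℓ) u
  rw [countDiff_swap, card_image_of_strictMono hm] at hAk
  simp only [countDiff] at hu hA0 hAk ⊢
  have hset : {p : ℕ | 1 ≤ p ∧ p ≤ k ∧
      ∀ i j : Fin k, (j.val : ℤ) - (i.val : ℤ) = (k : ℤ) - (p : ℤ) → ℓ i ≤ m j} =
      Set.Icc 1 (k + countLE (univ.image ℓ) u - countLE (univ.image m) u) := by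
    ext p
    simp only [Set.mem_ofPred_eq, Set.mem_Icc]
    constructor
    · rintro ⟨h1, hpk, h⟩
      have := (forall_le_shift_iff hℓ hm (k - p)).mp (fun i j hij => h i j (by omega)) u
      omega
    · rintro ⟨h1, hp⟩
      refine ⟨h1, by omega, fun i j hij => (forall_le_shift_iff hℓ hm (k - p)).mpr
        (fun x => ?_) i j (by omega)⟩
      have := hu x
      omega
  rw [kAlpha, hset, Nat.sSup_Icc_one]
  omega

lemma kBeta_eq_kAlpha (ℓ m : Fin k → ℤ) : kBeta k ℓ m = kAlpha k m ℓ := by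
  simp only [kBeta, kAlpha]
  congr! 4 with p
  exact and_congr_right' forall_comm

lemma kBeta_eq (hℓ : StrictMono ℓ) (hm : StrictMono m) {v : ℤ}
    (hv : ∀ x, countDiff (univ.image ℓ) (univ.image m) x ≤
      countDiff (univ.image ℓ) (univ.image m) v) :
    (kBeta k ℓ m : ℤ) = k - countDiff (univ.image ℓ) (univ.image m) v := by
  rw [kBeta_eq_kAlpha, kAlpha_eq hm hℓ fun x => (countDiff_swap_le_iff _ _).mpr (hv x),
    countDiff_swap]
  ring

lemma crossing_iff_interlace (ℓ m : Fin k → ℤ) :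
    Crossing k ℓ m ↔
      Interlace (univ.image ℓ \ univ.image m) (univ.image m \ univ.image ℓ) ∨
        Interlace (univ.image m \ univ.image ℓ) (univ.image ℓ \ univ.image m) := by
  simp only [Crossing, Interlace, ← Set.image_univ, ← coe_univ, ← coe_image, ← coe_sdiff,
    mem_coe]
  constructor
  · rintro ⟨i₁, i₂, j₁, j₂, hi₁, hi₂, hj₁, hj₂, ⟨h₁, h₂, h₃⟩ | ⟨h₁, h₂, h₃⟩⟩
    · exact .inl ⟨i₁, hi₁, j₁, hj₁, i₂, hi₂, j₂, hj₂, h₁, h₂, h₃⟩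
    · exact .inr ⟨j₁, hj₁, i₁, hi₁, j₂, hj₂, i₂, hi₂, h₁, h₂, h₃⟩
  · rintro (⟨a₁, ha₁, b₁, hb₁, a₂, ha₂, b₂, hb₂, h⟩ | ⟨a₁, ha₁, b₁, hb₁, a₂, ha₂, b₂, hb₂, h⟩)
    · exact ⟨a₁, a₂, b₁, b₂, ha₁, ha₂, hb₁, hb₂, .inl h⟩
    · exact ⟨b₁, b₂, a₁, a₂, hb₁, hb₂, ha₁, ha₂, .inr h⟩

end KSubsets

theorem noncrossing_iff (k : ℕ) (ℓ m : Fin k → ℤ)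
    (hℓ : StrictMono ℓ) (hm : StrictMono m) :
    ¬ Crossing k ℓ m ↔
      (kAlpha k ℓ m : ℤ) + (kBeta k ℓ m : ℤ)
        - ((Finset.univ.image ℓ ∩ Finset.univ.image m).card : ℤ) = (k : ℤ) := by
  obtain ⟨u, hu⟩ := exists_forall_le_countDiff (univ.image ℓ) (univ.image m)
  obtain ⟨v, hv⟩ := exists_forall_countDiff_le (univ.image ℓ) (univ.image m)
  have hLM : #(univ.image ℓ) = #(univ.image m) :=
    (card_image_of_strictMono hℓ).trans (card_image_of_strictMono hm).symm
  rw [crossing_iff_interlace, not_or, ← countDiff_sub_eq_card_sdiff_iff _ _ hLM hu hv,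
    kAlpha_eq hℓ hm hu, kBeta_eq hℓ hm hv]
  have := card_inter_add_card_sdiff (univ.image ℓ) (univ.image m)
  have := card_image_of_strictMono hℓ
  omega
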